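/- Let a ∈ (0,1] and μ ∈ (a²/(1+a²), 1). For κ ∈ [κ₂, μ], set D(κ) = κ² + a⁴(κ−2μ+1)² − a²(1 + 4κμ − 2κ − 2κ² − (2μ−1)²) and, when D(κ) ≥ 0, x₁(κ) = (κ + a²(2μ−κ−1) − √(D(κ)))/(2a(1+κ−μ)) and x₂(κ) = (κ + a²(2μ−κ−1) + √(D(κ)))/(2a(1+κ−μ)). Then: (i) D(κ) > 0 and 0 < x₁(κ) < x₂(κ) < 1/a for all κ ∈ (κ₂, μ); (ii) x₁(μ) = 0 and D(κ₂) = 0 (so x₁(κ₂) = x₂(κ₂)); (iii) for every κ ∈ [κ₂, μ] and every z ∈ ℂ \ {0, −a, 1/a}: (κ−μ)/z + (1−μ)/(z−1/a) + μ/(z+a) = (κ+1−μ)·(z−x₁(κ))(z−x₂(κ))/(z(z+a)(z−1/a)). -/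

import Mathlib

open Real Set MeasureTheory Filter

noncomputable section

/-- A domino: lower-left corner `(x, y)` and orientation
(`vertical = true` means a `1 × 2` rectangle). -/
structure Domino where
  x : ℤ
  y : ℤ
  vertical : Bool
deriving DecidableEq

/-- The closed planar region covered by a domino. -/
def Domino.region (d : Domino) : Set (ℝ × ℝ) :=
  if d.vertical then Set.Icc (d.x : ℝ) ((d.x : ℝ) + 1) ×ˢ Set.Icc (d.y : ℝ) ((d.y : ℝ) + 2)
  else Set.Icc (d.x : ℝ) ((d.x : ℝ) + 2) ×ˢ Set.Icc (d.y : ℝ) ((d.y : ℝ) + 1)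

/-- `T` is a domino tiling of the region `R`: the dominoes cover exactly `R`
and have pairwise disjoint interiors. -/
def IsTiling (R : Set (ℝ × ℝ)) (T : Finset Domino) : Prop :=
  (⋃ d ∈ T, d.region) = R ∧
    ∀ d ∈ T, ∀ d' ∈ T, d ≠ d' → interior d.region ∩ interior d'.region = ∅

/-- Number of vertical dominoes of a tiling. -/
def vertCount (T : Finset Domino) : ℕ := (T.filter fun d => d.vertical = true).card

/-- The closed unit square with lower-left corner `(i, j)`. -/
def unitSquare (i j : ℤ) : Set (ℝ × ℝ) :=
  Set.Icc (i : ℝ) ((i : ℝ) + 1) ×ˢ Set.Icc (j : ℝ) ((j : ℝ) + 1)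

/-- The Aztec diamond `A_N`. -/
def AztecDiamond (N : ℤ) : Set (ℝ × ℝ) :=
  ⋃₀ {S | ∃ i j : ℤ, S = unitSquare i j ∧
      S ⊆ {p : ℝ × ℝ | |p.1| + |p.2| ≤ (N : ℝ) + 1}}

/-- The L-shaped region `A_N^{m,k}`. -/
def AztecL (N m k : ℤ) : Set (ℝ × ℝ) :=
  ⋃₀ {S | ∃ i j : ℤ, S = unitSquare i j ∧
      S ⊆ {p : ℝ × ℝ | |p.1| + |p.2| ≤ (N : ℝ) + 1 ∧
        p.2 ≤ max (2*(m:ℝ) - 1 - (N:ℝ) - p.1) (p.1 - 2*(m:ℝ) - 1 + (N:ℝ) + 2*(k:ℝ))}}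

/-- The modified region `Ã_N^{m,k}`. -/
def AztecLtilde (N m k : ℤ) : Set (ℝ × ℝ) :=
  if m = N then AztecDiamond N
  else AztecL N (m+1) (k+1) \
      ({(2*(m:ℝ) + (k:ℝ) - (N:ℝ) - 1)} ×ˢ Set.Icc ((k:ℝ) - 1) (k:ℝ))

/-- Weighted count of domino tilings of a region: `Σ_T a^{v(T)}`. -/
def tilingSum (R : Set (ℝ × ℝ)) (a : ℝ) : ℝ :=
  ∑ᶠ T ∈ {T : Finset Domino | IsTiling R T}, a ^ vertCount T

/-- `F_N^{m,k}(a; ε)`. -/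
def Fcnt (N m k : ℤ) (a : ℝ) (ε : ℕ) : ℝ :=
  if ε = 1 then tilingSum (AztecL N m k) a else tilingSum (AztecLtilde N m k) a

/-- `F_N(a)`. -/
def FAztec (N : ℤ) (a : ℝ) : ℝ := tilingSum (AztecDiamond N) a

/-- `κ₂(μ)`. -/
def kappa2 (a μ : ℝ) : ℝ := (a^2*(2*μ - 1) + 2*a*Real.sqrt (μ*(1-μ)))/(1+a^2)

/-- `x₀(μ)`. -/
def x0 (a μ : ℝ) : ℝ := (-a - Real.sqrt (a^2 + 4*μ*(1-μ)))/(2*(1-μ))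

/-- `φ₀` (real form, valid at `x₀ < -a`). -/
def phi0 (a μ x : ℝ) : ℝ := (1-μ)*Real.log (1 - a*x) + μ*Real.log (x/(x+a))

/-- `φ₀''(x₀)`. -/
def phi0'' (a μ : ℝ) : ℝ := iteratedDeriv 2 (phi0 a μ) (x0 a μ)

/-- `x*`. -/
def xstar (a μ : ℝ) : ℝ :=
  (kappa2 a μ + a^2*(2*μ - kappa2 a μ - 1))/(2*a*(1 + kappa2 a μ - μ))

/-- `c*`. -/
def cstar (a μ : ℝ) : ℝ :=
  μ - kappa2 a μ + a^3*(1-μ)/(1/(xstar a μ) - a)^3 - μ/(1 + a/(xstar a μ))^3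

/-- `ζ'(-1)`. -/
def zetaDerivNeg1 : ℝ := (deriv riemannZeta (-1)).re

/-- The defining property of `z₀(κ, μ)`. -/
def z0spec (a κ μ : ℝ) (z : ℂ) : Prop :=
  0 < z.im ∧
  (1-μ)/‖z - 1/(a:ℂ)‖ + (μ-κ)/‖z‖ - μ/‖z + (a:ℂ)‖ = 0 ∧
  κ + 1 - μ - a*μ/‖z + (a:ℂ)‖ - (1-μ)/(a * ‖z - 1/(a:ℂ)‖) = 0

/-- `z₀(κ, μ)`, defined by choice from its defining property. -/
def z0 (a κ μ : ℝ) : ℂ := Classical.epsilon (z0spec a κ μ)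

/-- `G(κ, μ)`. -/
def Gfun (a κ μ : ℝ) : ℝ :=
  let z := z0 a κ μ
  let R := ‖z‖
  let X := z.re
  let Y := z.im
  let A1 := ‖z + (a:ℂ)‖
  let A2 := ‖z - 1/(a:ℂ)‖
  (μ-κ)/2 * (Real.log (4*R^2/(Y*(R+X))) - (X/R)*Real.log ((R+X)/Y))
  - (1-μ)/2 * (Real.log ((R*A2 + X/a - R^2)/((Y/2)*(A2 + 1/a - X)))
      + ((X - 1/a)/A2)*Real.log ((R+X)/Y))
  - μ/2 * (Real.log ((R*A1 + R^2 + a*X)/((Y/2)*(A1 + a + X)))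
      - ((X+a)/A1)*Real.log ((R+X)/Y))

/-- `H(κ, μ)`. -/
def Hfun (a : ℝ) (ε : ℕ) (κ μ : ℝ) : ℝ :=
  let z := z0 a κ μ
  let R := ‖z‖
  let X := z.re
  let Y := z.im
  let A2 := ‖z - 1/(a:ℂ)‖
  (ε:ℝ)/2 * Real.log ((a*Y^2/(2*(A2 + X - 1/a))) * ((R + A2 - 1/a)/(R + 1/a - A2))
      * ((R+X)/(R-X)))
  + Real.log (2*R/(R+X)) + Real.log (Real.cos (Complex.arg z / 2))

/-- `F(κ, μ)` (the 1/N-order coefficient in the ratio asymptotics). -/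
def Ffun (a : ℝ) (ε : ℕ) (κ μ : ℝ) : ℝ :=
  let z := z0 a κ μ
  let R := ‖z‖
  let Y := z.im
  let A2 := ‖z - 1/(a:ℂ)‖
  let γ : ℝ := (μ-κ)/((1-μ+κ)*R)
  let Q : ℂ → ℂ := fun w => (((κ+1-μ)/2 : ℝ) : ℂ) * (w - (γ:ℂ))/(w*(w+(a:ℂ))*(w-1/(a:ℂ)))
  let e0 : ℂ := -(((Real.sqrt 2 * Real.sqrt Y : ℝ)) : ℂ) * Q z
  let e1 : ℂ := (2/5 : ℂ) * deriv Q z / Q z - Complex.I/(10*(Y:ℂ))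
  let g1 : ℂ := Complex.exp (Complex.I * (Real.pi : ℂ) / 4) *
      (((Real.sqrt 2 * Real.sqrt Y : ℝ)) : ℂ) *
      (1/(z + (R:ℂ)) + (ε:ℂ)/(1/(a:ℂ) - z + (A2:ℂ)))
  let M1 : ℂ := 5/(12*z^2*e0) + (5/8)*e1/(z*e0) - g1^2/(z*e0)
  let t := Real.tan (Complex.arg z / 2)
  (Real.sqrt Y/(2*Real.sqrt 2)) * (t * M1.im - M1.re)
  - ((3/16)/(z*e0)).im/(2*Real.sqrt 2*Real.sqrt Y)
  + t * (((19/48)/(z*e0)).im/(2*Real.sqrt 2*Real.sqrt Y)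
      + (Complex.exp (-(Complex.I * (Real.pi : ℂ) / 4))*g1/(2*z*e0)).im)

/-- `C₂(κ, μ)`. -/
def C2fun (a κ μ : ℝ) : ℝ :=
  (1/2 - μ + μ^2)*Real.log (1+a^2) + ∫ κ' in (0:ℝ)..κ, Gfun a κ' μ

/-- `C₁(κ, μ)`. -/
def C1fun (a : ℝ) (ε : ℕ) (κ μ : ℝ) : ℝ :=
  (∫ κ' in (0:ℝ)..κ, Hfun a ε κ' μ) - phi0 a μ (x0 a μ)/2 + (1/2 - (ε:ℝ)*μ)*Real.log (1+a^2)

/-- `C₀(κ, μ)`. -/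
def C0fun (a : ℝ) (ε : ℕ) (κ μ : ℝ) : ℝ :=
  (∫ κ' in (0:ℝ)..κ, (Ffun a ε κ' μ - 1/(12*κ'))) + (1/12)*Real.log κ
  - (1/24)*deriv (fun s => Gfun a s μ) κ
  - (1/6)*Real.log (|x0 a μ|^2 * phi0'' a μ)
  - (ε:ℝ)/2*Real.log (1 - a*(x0 a μ)) + zetaDerivNeg1

end

set_option maxHeartbeats 1000000 in
/-- the saddle points `x₁(κ), x₂(κ)` of the phase `φ(·;κ)` and
the partial-fraction factorization of `φ′`. -/
theorem saddle_points_and_factorization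
    (a : ℝ) (ha : 0 < a) (ha1 : a ≤ 1) (μ : ℝ)
    (hμ : a^2/(1+a^2) < μ) (hμ1 : μ < 1) :
    let D : ℝ → ℝ := fun κ =>
      κ^2 + a^4*(κ - 2*μ + 1)^2 - a^2*(1 + 4*κ*μ - 2*κ - 2*κ^2 - (2*μ-1)^2)
    let x1 : ℝ → ℝ := fun κ => (κ + a^2*(2*μ-κ-1) - Real.sqrt (D κ))/(2*a*(1+κ-μ))
    let x2 : ℝ → ℝ := fun κ => (κ + a^2*(2*μ-κ-1) + Real.sqrt (D κ))/(2*a*(1+κ-μ))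
    (∀ κ ∈ Set.Ioo (kappa2 a μ) μ,
      0 < D κ ∧ 0 < x1 κ ∧ x1 κ < x2 κ ∧ x2 κ < 1/a) ∧
    x1 μ = 0 ∧ D (kappa2 a μ) = 0 ∧
    (∀ κ ∈ Set.Icc (kappa2 a μ) μ, ∀ z : ℂ,
      z ≠ 0 → z ≠ -(a:ℂ) → z ≠ 1/(a:ℂ) →
      ((κ:ℂ) - (μ:ℂ))/z + (1 - (μ:ℂ))/(z - 1/(a:ℂ)) + (μ:ℂ)/(z + (a:ℂ)) =
        ((κ:ℂ) + 1 - (μ:ℂ)) * (z - (x1 κ : ℝ)) * (z - (x2 κ : ℝ)) /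
          (z * (z + (a:ℂ)) * (z - 1/(a:ℂ)))) := by
  intro D x1 x2
  have hDdef : ∀ κ, D κ = κ^2 + a^4*(κ - 2*μ + 1)^2 - a^2*(1 + 4*κ*μ - 2*κ - 2*κ^2 - (2*μ-1)^2) :=
    fun κ => rfl
  have hx1def : ∀ κ, x1 κ = (κ + a^2*(2*μ-κ-1) - Real.sqrt (D κ))/(2*a*(1+κ-μ)) := fun κ => rfl
  have hx2def : ∀ κ, x2 κ = (κ + a^2*(2*μ-κ-1) + Real.sqrt (D κ))/(2*a*(1+κ-μ)) := fun κ => rfl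
  have ha2 : (0:ℝ) < 1 + a^2 := by positivity
  have hc : a^2 < μ*(1+a^2) := by
    rw [div_lt_iff₀ ha2] at hμ; linarith
  have hμ0 : 0 < μ := by nlinarith
  set r := Real.sqrt (μ*(1-μ)) with hrdef
  have hr : r^2 = μ*(1-μ) := Real.sq_sqrt (by nlinarith)
  have hr0 : 0 ≤ r := Real.sqrt_nonneg _
  have hrpos : 0 < r := Real.sqrt_pos.2 (by nlinarith)
  have hk2 : kappa2 a μ = (a^2*(2*μ - 1) + 2*a*r)/(1+a^2) := rfl
  -- D κ = u² - (2ar)²  where u = (1+a²)κ - a²(2μ-1)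
  have hDkey : ∀ κ, D κ = ((1+a^2)*κ - a^2*(2*μ-1))^2 - (2*a*r)^2 := by
    intro κ; rw [hDdef]; linear_combination (4*a^2) * hr
  -- 1 + kappa2 - μ > 0
  have hk2lb : μ - 1 < kappa2 a μ := by
    rw [hk2, lt_div_iff₀ ha2]; nlinarith [mul_nonneg (mul_nonneg (by norm_num : (0:ℝ) ≤ 2) ha.le) hr0]
  -- the key positivity: a(2μ-1) + (1-a²) r > 0
  have hT : 0 < a*(2*μ-1) + (1-a^2)*r := by
    rcases lt_or_ge μ (1/2) with hhalf | hhalf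
    · have ha' : a < 1 := by
        rcases lt_or_ge a 1 with h | h
        · exact h
        · exfalso; have : a = 1 := le_antisymm ha1 h; rw [this] at hc; nlinarith
      have h1 : a^2 < μ*(1-μ)*(1+a^2)^2 := by nlinarith [mul_pos (by nlinarith : (0:ℝ) < μ*(1+a^2) - a^2) (by nlinarith : (0:ℝ) < 1 - μ*(1+a^2))]
      -- ((1-a²)r)² > (a(1-2μ))²
      nlinarith [hr, mul_nonneg (by nlinarith : (0:ℝ) ≤ 1-a^2) hr0,
        mul_nonneg ha.le (by nlinarith : (0:ℝ) ≤ 1-2*μ),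
        sq_nonneg ((1-a^2)*r - a*(1-2*μ)), sq_nonneg ((1-a^2)*r + a*(1-2*μ))]
    · rcases lt_or_ge a 1 with ha' | ha'
      · nlinarith [mul_pos (by nlinarith : (0:ℝ) < 1-a^2) hrpos]
      · have : a = 1 := le_antisymm ha1 ha'
        rw [this]; rw [this] at hc; nlinarith
  refine ⟨?_, ?_, ?_, ?_⟩
  · -- part (i)
    rintro κ ⟨hκl, hκu⟩
    have hu : 2*a*r < (1+a^2)*κ - a^2*(2*μ-1) := by
      rw [hk2, div_lt_iff₀ ha2] at hκl; nlinarith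
    have h2ar : 0 ≤ 2*a*r := by positivity
    have hD : 0 < D κ := by rw [hDkey]; nlinarith
    set s := Real.sqrt (D κ) with hsdef
    have hs : s^2 = D κ := Real.sq_sqrt hD.le
    have hs0 : 0 ≤ s := Real.sqrt_nonneg _
    have hspos : 0 < s := Real.sqrt_pos.2 hD
    have hden : 0 < 1 + κ - μ := by linarith
    have hcpos : 0 < 2*a*(1+κ-μ) := by positivity
    -- N > 0
    have hN : 0 < κ + a^2*(2*μ-κ-1) := by
      nlinarith [mul_pos ha hT, mul_nonneg (by nlinarith : (0:ℝ) ≤ 1-a^2)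
        (by linarith : (0:ℝ) ≤ (1+a^2)*κ - a^2*(2*μ-1) - 2*a*r)]
    -- N² - D = 4a²(μ-κ)(1+κ-μ) > 0 ⇒ s < N
    have hNsq : (κ + a^2*(2*μ-κ-1))^2 - D κ = 4*a^2*((μ-κ)*(1+κ-μ)) := by
      rw [hDdef]; ring
    have hsN : s < κ + a^2*(2*μ-κ-1) := by
      nlinarith [hs, hN, hs0, mul_pos (mul_pos (by positivity : (0:ℝ) < 4*a^2)
        (by linarith : (0:ℝ) < μ - κ)) hden]
    refine ⟨hD, ?_, ?_, ?_⟩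
    · rw [hx1def]; exact div_pos (by linarith) hcpos
    · rw [hx1def, hx2def, div_lt_div_iff₀ hcpos hcpos]; nlinarith [mul_pos hspos hcpos]
    · -- x2 < 1/a : need s < 2(1+κ-μ) - N
      have hsM : s < 2*(1+κ-μ) - (κ + a^2*(2*μ-κ-1)) := by
        have hkey : s^2 = ((1+a^2)*κ - a^2*(2*μ-1))^2 - (2*a*r)^2 := by rw [hs, hDkey]
        nlinarith [hs0, hu, h2ar, hμ1, sq_nonneg (s - ((1+a^2)*κ - a^2*(2*μ-1))),
          sq_nonneg (s + ((1+a^2)*κ - a^2*(2*μ-1)))]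
      rw [hx2def, div_lt_div_iff₀ hcpos ha]
      nlinarith [mul_pos ha (by linarith : (0:ℝ) < 2*(1+κ-μ) - (κ + a^2*(2*μ-κ-1) + s))]
  · -- x1 μ = 0
    have hpos : 0 < μ - a^2*(1-μ) := by nlinarith
    have hsq : D μ = (μ - a^2*(1-μ))^2 := by rw [hDdef]; ring
    rw [hx1def, hsq, Real.sqrt_sq hpos.le]
    have hnum : μ + a^2*(2*μ-μ-1) - (μ - a^2*(1-μ)) = 0 := by ring
    rw [hnum, zero_div]
  · -- D(kappa2) = 0
    have hval : (1+a^2) * kappa2 a μ - a^2*(2*μ-1) = 2*a*r := by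
      rw [hk2]; field_simp; ring
    rw [hDkey, hval]; ring
  · -- part (iii)
    rintro κ ⟨hκl, hκu⟩ z hz hz2 hz3
    have hu : 2*a*r ≤ (1+a^2)*κ - a^2*(2*μ-1) := by
      rw [hk2, div_le_iff₀ ha2] at hκl; nlinarith
    have h2ar : 0 ≤ 2*a*r := by positivity
    have hD0 : 0 ≤ D κ := by rw [hDkey]; nlinarith
    set s := Real.sqrt (D κ) with hsdef
    have hs : s^2 = D κ := Real.sq_sqrt hD0
    have hden : 0 < 1 + κ - μ := by
      have := hk2lb; linarith
    have hcne : 2*a*(1+κ-μ) ≠ 0 := by positivity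
    have hsumR : (a*(1+κ-μ)) * (x1 κ + x2 κ) = κ + a^2*(2*μ-κ-1) := by
      rw [hx1def, hx2def, ← add_div]
      field_simp
      ring
    have hprodR : (1+κ-μ) * (x1 κ * x2 κ) = μ - κ := by
      have hs' : s^2 = κ^2 + a^4*(κ - 2*μ + 1)^2 - a^2*(1 + 4*κ*μ - 2*κ - 2*κ^2 - (2*μ-1)^2) := by
        rw [hs, hDdef]
      have h2 : (κ + a^2*(2*μ-κ-1) - s) * (κ + a^2*(2*μ-κ-1) + s) = 4*a^2*((μ-κ)*(1+κ-μ)) := by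
        linear_combination -hs'
      rw [hx1def, hx2def, div_mul_div_comm, h2]
      field_simp
      ring
    -- cast to ℂ
    have hsum : ((a:ℂ)*(1+(κ:ℂ)-(μ:ℂ))) * ((x1 κ:ℂ) + (x2 κ:ℂ)) = (κ:ℂ) + (a:ℂ)^2*(2*(μ:ℂ)-(κ:ℂ)-1) := by
      exact_mod_cast congrArg (fun t : ℝ => (t:ℂ)) hsumR
    have hprod : ((1:ℂ)+(κ:ℂ)-(μ:ℂ)) * ((x1 κ:ℂ) * (x2 κ:ℂ)) = (μ:ℂ) - (κ:ℂ) := by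
      exact_mod_cast congrArg (fun t : ℝ => (t:ℂ)) hprodR
    have ha' : (a:ℂ) ≠ 0 := by exact_mod_cast ha.ne'
    set b : ℂ := 1/(a:ℂ) with hbdef
    have hb : (a:ℂ) * b = 1 := by rw [hbdef]; field_simp
    have hza : z + (a:ℂ) ≠ 0 := by intro h; exact hz2 (by linear_combination h)
    have hzb : z - b ≠ 0 := sub_ne_zero.mpr hz3
    have key : ((κ:ℂ)-(μ:ℂ))*(z-b)*(z+(a:ℂ)) + (1-(μ:ℂ))*z*(z+(a:ℂ)) + (μ:ℂ)*(z*(z-b))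
        = ((κ:ℂ)+1-(μ:ℂ))*(z-(x1 κ:ℂ))*(z-(x2 κ:ℂ)) := by
      apply mul_left_cancel₀ ha'
      linear_combination z*hsum - (κ:ℂ)*z*hb + (a:ℂ)*((μ:ℂ)-(κ:ℂ))*hb - (a:ℂ)*hprod
    rw [div_add_div _ _ hz hzb, div_add_div _ _ (mul_ne_zero hz hzb) hza,
      div_eq_div_iff (mul_ne_zero (mul_ne_zero hz hzb) hza)
        (mul_ne_zero (mul_ne_zero hz hza) hzb)]
    linear_combination (z*(z+(a:ℂ))*(z-b)) * key
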